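/- Let r = [a_0; a_1, …, a_n] be a Landess (σ,k)-permutiple and let s = [b_0; b_1, …, b_m] be a Landess (τ,k)-permutiple (same multiplier k). Define the permutation π of {0, 1, …, n+m+1} by π(j) = σ(j) for 0 ≤ j ≤ n and π(n+1+j) = n+1+τ(j) for 0 ≤ j ≤ m. Then the concatenation r ∘ s = [a_0; a_1, …, a_n, b_0, b_1, …, b_m] is a Landess (π,k)-permutiple. -/

import Mathlib

/-- Value of the finite simple continued fraction `[x₀; x₁, …, xₙ]`. -/
def cfv : List ℚ → ℚ
  | [] => 0
  | [x] => x
  | x :: y :: t => x + 1 / cfv (y :: t)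

/-- The continuant `K(x₀, …, xₙ)`: `K() = 1`, `K(x₀) = x₀`, and the usual
three-term recurrence. -/
def cont : List ℕ → ℕ
  | [] => 1
  | [x] => x
  | x :: y :: t => x * cont (y :: t) + cont t

/-- The digit string of `a`, as a list of rationals. -/
def digitsQ {N : ℕ} (a : Fin N → ℕ) : List ℚ := (List.ofFn a).map (fun x => (x : ℚ))

/-- `[a₀; a₁, …, aₙ]` (canonical: positive digits, last digit ≥ 2) is a
`(σ,k)`-permutiple: it equals `k` times the continued fraction of the permuted digits. -/
def IsPermutiple {n : ℕ} (a : Fin (n+1) → ℕ) (σ : Equiv.Perm (Fin (n+1))) (k : ℕ) : Prop :=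
  (∀ j, 0 < a j) ∧ 2 ≤ a (Fin.last n) ∧ 1 < k ∧
    cfv (digitsQ a) = k * cfv (digitsQ (a ∘ σ))

/-- A `(σ,k)`-permutiple is continuant-preserving if
`K(a₀,…,aₙ) = K(a_{σ(0)},…,a_{σ(n)})`. -/
def ContinuantPreserving {n : ℕ} (a : Fin (n+1) → ℕ) (σ : Equiv.Perm (Fin (n+1))) : Prop :=
  cont (List.ofFn a) = cont (List.ofFn (a ∘ σ))

/-- A `(σ,k)`-permutiple is perfect if `a_j = k·a_{σ(j)}` for even `j` and
`a_{σ(j)} = k·a_j` for odd `j`. -/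
def IsPerfect {n : ℕ} (a : Fin (n+1) → ℕ) (σ : Equiv.Perm (Fin (n+1))) (k : ℕ) : Prop :=
  ∀ j : Fin (n+1), (Even (j : ℕ) → a j = k * a (σ j)) ∧ (Odd (j : ℕ) → a (σ j) = k * a j)

/-- A `(σ,k)`-permutiple is symmetric if `a_j·a_{n−j} = a_{σ(j)}·a_{σ(n−j)}` for all `j`. -/
def IsSymmetric {n : ℕ} (a : Fin (n+1) → ℕ) (σ : Equiv.Perm (Fin (n+1))) : Prop :=
  ∀ j : Fin (n+1), a j * a j.rev = a (σ j) * a (σ j.rev)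

/-- A Landess permutiple: a continuant-preserving `(σ,k)`-permutiple with
`q_{n−1} = q'_{n−1}` and `p_{n−1} = k·p'_{n−1}`. -/
def IsLandess {n : ℕ} (a : Fin (n+1) → ℕ) (σ : Equiv.Perm (Fin (n+1))) (k : ℕ) : Prop :=
  IsPermutiple a σ k ∧ ContinuantPreserving a σ ∧
    cont ((List.ofFn a).tail.dropLast) = cont ((List.ofFn (a ∘ σ)).tail.dropLast) ∧
    cont ((List.ofFn a).dropLast) = k * cont ((List.ofFn (a ∘ σ)).dropLast)

/-!
Write `K` for the continuant. Splitting the product of the matrices `!![x, 1; 1, 0]` gives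
`K(u ++ v) = K(u) K(v) + K(dropLast u) K(tail v)`. Given `K(u) = K(u')`, the permutiple equation
`K(u)/K(tail u) = k K(u')/K(tail u')` for digits `u` and permuted digits `u'` becomes
`K(tail u') = k K(tail u)`. With the three Landess identities this makes four bilinear relations
between the continuants of `u, tail u, dropLast u, tail (dropLast u)` and those of `u'`, and the
concatenation formula carries them over to `u ++ v` and `u' ++ v'`.
-/

lemma cont_cons_cons (x y : ℕ) (t : List ℕ) :
    cont (x :: y :: t) = x * cont (y :: t) + cont t := rfl

lemma cont_cons (x : ℕ) {v : List ℕ} (hv : v ≠ []) :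
    cont (x :: v) = x * cont v + cont v.tail := by
  obtain ⟨y, t, rfl⟩ := List.exists_cons_of_ne_nil hv
  rfl

lemma cont_append : ∀ (u : List ℕ) {v : List ℕ}, u ≠ [] → v ≠ [] →
    cont (u ++ v) = cont u * cont v + cont u.dropLast * cont v.tail
  | [x], v, _, hv => by simp [cont_cons x hv, cont]
  | [x, y], v, _, hv => by
      simp only [List.cons_append, List.nil_append, cont_cons_cons, cont_cons y hv, cont,
        List.dropLast]
      ring
  | x :: y :: z :: t, v, _, hv => by
      rw [show x :: y :: z :: t ++ v = x :: (y :: z :: t ++ v) from rfl, cont_cons x (by simp),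
        List.tail_append_of_ne_nil (by simp), List.tail_cons,
        cont_append (y :: z :: t) (by simp) hv, cont_append (z :: t) (by simp) hv]
      simp only [List.dropLast_cons_cons, cont_cons_cons]
      ring

lemma cont_pos : ∀ {l : List ℕ}, (∀ x ∈ l, 0 < x) → 0 < cont l
  | [], _ => Nat.one_pos
  | [x], h => h x (by simp)
  | x :: y :: t, h => by
      rw [cont_cons_cons]
      exact Nat.add_pos_left (Nat.mul_pos (h x (by simp))
        (cont_pos fun z hz => h z (List.mem_cons_of_mem x hz))) _

lemma cfv_map_natCast : ∀ {l : List ℕ}, l ≠ [] → (∀ x ∈ l, 0 < x) →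
    cfv (l.map (fun x => (x : ℚ))) = (cont l : ℚ) / cont l.tail
  | [x], _, _ => by simp [cfv, cont]
  | x :: y :: t, _, h => by
      have ih := cfv_map_natCast (l := y :: t) (by simp) fun z hz => h z (by simp [hz])
      have hpos : (0 : ℚ) < cont (y :: t) :=
        mod_cast cont_pos fun z hz => h z (List.mem_cons_of_mem x hz)
      have hval : cfv ((x :: y :: t).map (fun x => (x : ℚ))) =
          x + 1 / cfv ((y :: t).map (fun x => (x : ℚ))) := rfl
      rw [hval, ih, List.tail_cons, List.tail_cons, cont_cons_cons]
      field_simp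
      push_cast
      ring

lemma cfv_eq_mul_cfv_iff {u u' : List ℕ} {k : ℕ} (hu : u ≠ []) (hu' : u' ≠ [])
    (hupos : ∀ x ∈ u, 0 < x) (hupos' : ∀ x ∈ u', 0 < x) (hK : cont u = cont u') :
    cfv (u.map (fun x => (x : ℚ))) = k * cfv (u'.map (fun x => (x : ℚ))) ↔
      cont u'.tail = k * cont u.tail := by
  have hK0 : (0 : ℚ) < cont u := mod_cast cont_pos hupos
  have ht : (0 : ℚ) < cont u.tail :=
    mod_cast cont_pos fun x hx => hupos x (List.mem_of_mem_tail hx)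
  have ht' : (0 : ℚ) < cont u'.tail :=
    mod_cast cont_pos fun x hx => hupos' x (List.mem_of_mem_tail hx)
  rw [cfv_map_natCast hu hupos, cfv_map_natCast hu' hupos', ← hK, mul_div_assoc',
    div_eq_div_iff ht.ne' ht'.ne', mul_comm (k : ℚ), mul_assoc, mul_right_inj' hK0.ne']
  norm_cast

structure LandessPair (k : ℕ) (u u' : List ℕ) : Prop where
  cont_eq : cont u = cont u'
  cont_tail : cont u'.tail = k * cont u.tail
  cont_tail_dropLast : cont u.tail.dropLast = cont u'.tail.dropLast
  cont_dropLast : cont u.dropLast = k * cont u'.dropLast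

lemma isLandess_iff {n : ℕ} {a : Fin (n+1) → ℕ} {σ : Equiv.Perm (Fin (n+1))} {k : ℕ} :
    IsLandess a σ k ↔ (∀ j, 0 < a j) ∧ 2 ≤ a (Fin.last n) ∧ 1 < k ∧
      LandessPair k (List.ofFn a) (List.ofFn (a ∘ σ)) := by
  have hpos : ∀ f : Fin (n+1) → ℕ, (∀ j, 0 < f j) → ∀ x ∈ List.ofFn f, 0 < x := by
    intro f h x hx
    obtain ⟨j, rfl⟩ := List.mem_ofFn.1 hx
    exact h j
  have hval (ha : ∀ j, 0 < a j) := cfv_eq_mul_cfv_iff (k := k) (by simp) (by simp)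
    (hpos a ha) (hpos (a ∘ σ) fun j => ha (σ j))
  constructor
  · rintro ⟨⟨ha, hlast, hk, hcfv⟩, hK, hq, hp⟩
    exact ⟨ha, hlast, hk, hK, (hval ha hK).1 hcfv, hq, hp⟩
  · rintro ⟨ha, hlast, hk, ⟨hK, ht, hq, hp⟩⟩
    exact ⟨⟨ha, hlast, hk, (hval ha hK).2 ht⟩, hK, hq, hp⟩

lemma LandessPair.one_lt_length {k : ℕ} {u u' : List ℕ} (h : LandessPair k u u') (hk : 1 < k)
    (hlen : u.length = u'.length) : 1 < u.length := by
  by_contra! hu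
  have hd : u.dropLast = [] := List.eq_nil_of_length_eq_zero (by simp; omega)
  have hd' : u'.dropLast = [] := List.eq_nil_of_length_eq_zero (by simp; omega)
  have := h.cont_dropLast
  rw [hd, hd'] at this
  simp [cont] at this
  omega

lemma LandessPair.append {k : ℕ} {u u' v v' : List ℕ} (hA : LandessPair k u u')
    (hB : LandessPair k v v') (hu : 1 < u.length) (hu' : 1 < u'.length) (hv : 1 < v.length)
    (hv' : 1 < v'.length) : LandessPair k (u ++ v) (u' ++ v') := by
  have ne {w : List ℕ} (hw : 1 < w.length) : w ≠ [] := List.ne_nil_of_length_pos (by omega)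
  have tail_ne {w : List ℕ} (hw : 1 < w.length) : w.tail ≠ [] :=
    List.ne_nil_of_length_pos (by simp; omega)
  have dropLast_ne {w : List ℕ} (hw : 1 < w.length) : w.dropLast ≠ [] :=
    List.ne_nil_of_length_pos (by simp; omega)
  obtain ⟨hK, ht, hq, hp⟩ := hA
  obtain ⟨hK₂, ht₂, hq₂, hp₂⟩ := hB
  constructor
  · rw [cont_append u (ne hu) (ne hv), cont_append u' (ne hu') (ne hv'), hK, hK₂, hp, ht₂]
    ring
  · rw [List.tail_append_of_ne_nil (ne hu), List.tail_append_of_ne_nil (ne hu'),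
      cont_append u.tail (tail_ne hu) (ne hv), cont_append u'.tail (tail_ne hu') (ne hv'),
      ht, hK₂, ht₂, hq]
    ring
  · rw [List.tail_append_of_ne_nil (ne hu), List.tail_append_of_ne_nil (ne hu'),
      List.dropLast_append_of_ne_nil (ne hv), List.dropLast_append_of_ne_nil (ne hv'),
      cont_append u.tail (tail_ne hu) (dropLast_ne hv),
      cont_append u'.tail (tail_ne hu') (dropLast_ne hv'), List.tail_dropLast,
      List.tail_dropLast, ht, hp₂, hq, hq₂]
    ring
  · rw [List.dropLast_append_of_ne_nil (ne hv), List.dropLast_append_of_ne_nil (ne hv'),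
      cont_append u (ne hu) (dropLast_ne hv), cont_append u' (ne hu') (dropLast_ne hv'),
      List.tail_dropLast, List.tail_dropLast, hK, hp, hp₂, hq₂]
    ring

lemma Fin.append_comp_permCongr_sumCongr {α : Type*} {p q : ℕ} (a : Fin p → α)
    (b : Fin q → α) (σ : Equiv.Perm (Fin p)) (τ : Equiv.Perm (Fin q)) :
    Fin.append a b ∘ finSumFinEquiv.permCongr (Equiv.sumCongr σ τ) =
      Fin.append (a ∘ σ) (b ∘ τ) := by
  funext i
  induction i using Fin.addCases <;> simp [Equiv.permCongr_apply]

/-- The concatenation of two Landess permutiples with the same multiplier `k`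
is again a Landess permutiple with multiplier `k`, for the permutation acting as
`σ` on the first block of indices and as `τ` on the second. -/
theorem stmt17 {n m : ℕ} (a : Fin (n+1) → ℕ) (b : Fin (m+1) → ℕ)
    (σ : Equiv.Perm (Fin (n+1))) (τ : Equiv.Perm (Fin (m+1))) (k : ℕ)
    (hr : IsLandess a σ k) (hs : IsLandess b τ k) :
    IsLandess (n := n+1+m) ((Fin.append a b : Fin ((n+1)+(m+1)) → ℕ))
      ((finSumFinEquiv.permCongr (Equiv.sumCongr σ τ) : Equiv.Perm (Fin ((n+1)+(m+1))))) k := by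
  obtain ⟨ha, -, hk, hA⟩ := isLandess_iff.1 hr
  obtain ⟨hb, hblast, -, hB⟩ := isLandess_iff.1 hs
  have hn : 0 < n := by simpa using hA.one_lt_length hk (by simp)
  have hm : 0 < m := by simpa using hB.one_lt_length hk (by simp)
  refine isLandess_iff.2 ⟨fun j => ?_, ?_, hk, ?_⟩
  · refine Fin.addCases (m := n+1) (n := m+1) (motive := fun i => 0 < Fin.append a b i)
      (fun i => ?_) (fun i => ?_) j
    · rw [Fin.append_left]; exact ha i
    · rw [Fin.append_right]; exact hb i
  · rw [show Fin.last (n+1+m) = Fin.natAdd (n+1) (Fin.last m) from rfl, Fin.append_right]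
    exact hblast
  · rw [Fin.append_comp_permCongr_sumCongr, List.ofFn_fin_append, List.ofFn_fin_append]
    exact hA.append hB (by simpa) (by simpa) (by simpa) (by simpa)
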